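/- arXiv:1403.5313 — 3 statements merged into one kernel-verified Lean document; each statement's English description precedes it below -/
import Mathlib

section
/- For integers c and c', the pointwise product map f ⊗ g ↦ fg induces an isomorphism of Hilbert C(𝕋²)-bimodules M^c ⊗_{C(𝕋²)} M^{c'} ≅ M^{c+c'}, where M^c = {f ∈ C_b(ℝ × 𝕋) : f(x+1,y) = e^{2πicy} f(x,y)}. -/
open TensorProduct

set_option synthInstance.maxHeartbeats 1000000
set_option maxHeartbeats 1000000

/-- `e(t) = exp(2πit)`. -/
noncomputable def e (t : ℝ) : ℂ := Complex.exp (2 * Real.pi * Complex.I * t)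

/-- `M^c`: bounded continuous functions on `ℝ × 𝕋` with `f(x+1,y) = e(cy) f(x,y)`. -/
noncomputable def Mc (c : ℤ) : Submodule ℂ ((ℝ × ℝ) → ℂ) where
  carrier := {f | Continuous f ∧ (∃ C, ∀ p, ‖f p‖ ≤ C) ∧
    (∀ x y : ℝ, f (x, y + 1) = f (x, y)) ∧
    (∀ x y : ℝ, f (x + 1, y) = e (c * y) * f (x, y))}
  add_mem' := by
    rintro f g ⟨hfc, ⟨Cf, hCf⟩, hfy, hfx⟩ ⟨hgc, ⟨Cg, hCg⟩, hgy, hgx⟩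
    refine ⟨hfc.add hgc, ⟨Cf + Cg, fun p => ?_⟩, fun x y => ?_, fun x y => ?_⟩
    · exact (norm_add_le _ _).trans (add_le_add (hCf p) (hCg p))
    · simp only [Pi.add_apply, hfy x y, hgy x y]
    · simp only [Pi.add_apply, hfx x y, hgx x y]; ring
  zero_mem' := ⟨continuous_const, ⟨0, by simp⟩, by simp, by simp⟩
  smul_mem' := by
    rintro a f ⟨hfc, ⟨Cf, hCf⟩, hfy, hfx⟩
    refine ⟨hfc.const_smul a, ⟨‖a‖ * Cf, fun p => ?_⟩, fun x y => ?_, fun x y => ?_⟩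
    · rw [Pi.smul_apply, norm_smul]
      exact mul_le_mul_of_nonneg_left (hCf p) (norm_nonneg a)
    · simp only [Pi.smul_apply, hfy x y]
    · simp only [Pi.smul_apply, hfx x y, smul_eq_mul]; ring

/-- The `C(𝕋²)`-balanced relation in `M^c ⊗[ℂ] M^{c'}`:
`(φ·f) ⊗ g ∼ f ⊗ (φ·g)` for `φ ∈ C(𝕋²) = M^0`. -/
noncomputable def balanced (c c' : ℤ) : Submodule ℂ (Mc c ⊗[ℂ] Mc c') :=
  Submodule.span ℂ {z | ∃ (φ : (ℝ × ℝ) → ℂ) (_ : φ ∈ Mc 0)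
    (f f₁ : Mc c) (g g₁ : Mc c'),
      (f₁ : (ℝ × ℝ) → ℂ) = φ * (f : (ℝ × ℝ) → ℂ) ∧
      (g₁ : (ℝ × ℝ) → ℂ) = φ * (g : (ℝ × ℝ) → ℂ) ∧
      z = f₁ ⊗ₜ[ℂ] g - f ⊗ₜ[ℂ] g₁}

/-!
Everything follows from a finite frame: `u₁, u₂ ∈ M^c` and `v₁, v₂ ∈ M^{-c}` with
`u₁v₁ + u₂v₂ = 1`. Then `h ↦ Σ uᵢ ⊗ vᵢh` is a right inverse of the product map, and modulo the
balanced relation `f ⊗ g = Σ (vᵢf)uᵢ ⊗ g ≡ Σ uᵢ ⊗ (vᵢf)g`, which is that right inverse applied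
to `fg`; since `vᵢf ∈ M^0 = C(𝕋²)`, this identifies the kernel.
The frame is `|sin πx| e(c⌊x⌋y)` and its translate by `1/2` in `x`: `⌊x⌋` jumps only where
`sin πx` vanishes, and `sin² + cos² = 1`.
-/

lemma e_add (s t : ℝ) : e (s + t) = e s * e t := by
  simp only [e, ← Complex.exp_add, Complex.ofReal_add]
  ring_nf

lemma e_intCast (n : ℤ) : e n = 1 := by
  rw [e, show 2 * (Real.pi : ℂ) * Complex.I * ((n : ℝ) : ℂ) = n * (2 * Real.pi * Complex.I) by
    push_cast; ring]
  exact Complex.exp_int_mul_two_pi_mul_I n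

lemma norm_e (t : ℝ) : ‖e t‖ = 1 := by
  rw [e, show 2 * (Real.pi : ℂ) * Complex.I * t = ((2 * Real.pi * t : ℝ) : ℂ) * Complex.I by
    push_cast; ring]
  exact Complex.norm_exp_ofReal_mul_I _

lemma e_mul_e_neg (t : ℝ) : e t * e (-t) = 1 := by
  rw [← e_add, add_neg_cancel, ← Int.cast_zero, e_intCast]

lemma continuous_e : Continuous e := by
  unfold e
  fun_prop

lemma mul_mem_Mc {a b d : ℤ} (hd : a + b = d) {f g : (ℝ × ℝ) → ℂ}
    (hf : f ∈ Mc a) (hg : g ∈ Mc b) : f * g ∈ Mc d := by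
  subst hd
  obtain ⟨hfc, ⟨Cf, hCf⟩, hfy, hfx⟩ := hf
  obtain ⟨hgc, ⟨Cg, hCg⟩, hgy, hgx⟩ := hg
  refine ⟨hfc.mul hgc, ⟨Cf * Cg, fun p => ?_⟩, fun x y => ?_, fun x y => ?_⟩
  · rw [Pi.mul_apply, norm_mul]
    exact mul_le_mul (hCf p) (hCg p) (norm_nonneg _) ((norm_nonneg _).trans (hCf p))
  · simp only [Pi.mul_apply, hfy x y, hgy x y]
  · simp only [Pi.mul_apply, hfx x y, hgx x y, Int.cast_add, add_mul, e_add]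
    ring

lemma comp_translate_mem_Mc {c : ℤ} {f : (ℝ × ℝ) → ℂ} (hf : f ∈ Mc c) (s : ℝ) :
    (fun p : ℝ × ℝ => f (p.1 + s, p.2)) ∈ Mc c := by
  obtain ⟨hfc, ⟨C, hC⟩, hfy, hfx⟩ := hf
  refine ⟨hfc.comp (by fun_prop), ⟨C, fun p => hC _⟩, fun x y => hfy _ _, fun x y => ?_⟩
  rw [← hfx, add_right_comm]

lemma Continuous.mul_of_continuousAt_of_ne_zero {X R : Type*} [TopologicalSpace X]
    [SeminormedRing R] {f g : X → R} (hf : Continuous f) {C : ℝ} (hgC : ∀ x, ‖g x‖ ≤ C)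
    (hg : ∀ x, f x ≠ 0 → ContinuousAt g x) : Continuous (f * g) := by
  refine continuous_iff_continuousAt.2 fun x => ?_
  by_cases hx : f x = 0
  · have hbound : Filter.Tendsto (fun y => ‖f y‖ * C) (nhds x) (nhds 0) := by
      simpa [hx] using ((hf.tendsto x).norm.mul_const C)
    rw [ContinuousAt, Pi.mul_apply, hx, zero_mul]
    exact squeeze_zero_norm (fun y => (norm_mul_le _ _).trans
      (mul_le_mul_of_nonneg_left (hgC y) (norm_nonneg _))) hbound
  · exact (hf.continuousAt).mul (hg x hx)

lemma eventually_floor_eq {x : ℝ} (hx : ∀ n : ℤ, x ≠ n) : ∀ᶠ y in nhds x, ⌊y⌋ = ⌊x⌋ := by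
  have hlt : (⌊x⌋ : ℝ) < x := (Int.floor_le x).lt_of_ne (hx _).symm
  filter_upwards [Ioo_mem_nhds hlt (Int.lt_floor_add_one x)] with y hy
  exact Int.floor_eq_iff.2 ⟨hy.1.le, hy.2⟩

noncomputable def sinBump (c : ℤ) (p : ℝ × ℝ) : ℂ :=
  (|Real.sin (Real.pi * p.1)| : ℝ) * e ((c * ⌊p.1⌋ : ℤ) * p.2)

lemma continuous_sinBump (c : ℤ) : Continuous (sinBump c) := by
  refine Continuous.mul_of_continuousAt_of_ne_zero (f := fun p : ℝ × ℝ =>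
    ((|Real.sin (Real.pi * p.1)| : ℝ) : ℂ)) (by fun_prop) (fun p => (norm_e _).le) fun p hp => ?_
  have hx : ∀ n : ℤ, p.1 ≠ n := by
    rintro n hn
    exact hp (by rw [hn, mul_comm, Real.sin_int_mul_pi]; simp)
  have hfloor : ∀ᶠ q : ℝ × ℝ in nhds p, ⌊q.1⌋ = ⌊p.1⌋ :=
    continuousAt_fst.eventually (eventually_floor_eq hx)
  refine ((continuous_e.comp (by fun_prop : Continuous fun q : ℝ × ℝ =>
    ((c * ⌊p.1⌋ : ℤ) : ℝ) * q.2)).continuousAt).congr ?_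
  filter_upwards [hfloor] with q hq
  simp only [Function.comp_apply, hq]

lemma sinBump_mem_Mc (c : ℤ) : sinBump c ∈ Mc c := by
  refine ⟨continuous_sinBump c, ⟨1, fun p => ?_⟩, fun x y => ?_, fun x y => ?_⟩
  · rw [sinBump, norm_mul, norm_e, mul_one, Complex.norm_real, Real.norm_eq_abs, abs_abs]
    exact Real.abs_sin_le_one _
  · rw [sinBump, sinBump, mul_add, mul_one, e_add, e_intCast, mul_one]
  · rw [sinBump, sinBump, Int.floor_add_one, mul_add, mul_one, Real.sin_add_pi, abs_neg,
      mul_add c, mul_one, Int.cast_add, add_mul, e_add]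
    ring

lemma sinBump_mul_sinBump_neg (c : ℤ) (p : ℝ × ℝ) :
    sinBump c p * sinBump (-c) p = (Real.sin (Real.pi * p.1) ^ 2 : ℝ) := by
  have he := e_mul_e_neg (((c * ⌊p.1⌋ : ℤ) : ℝ) * p.2)
  rw [sinBump, sinBump, neg_mul, Int.cast_neg, neg_mul, ← sq_abs, Complex.ofReal_pow]
  linear_combination ((|Real.sin (Real.pi * p.1)| : ℝ) : ℂ) ^ 2 * he

lemma exists_frame (c : ℤ) : ∃ (u : Fin 2 → Mc c) (v : Fin 2 → Mc (-c)),
    ∑ i, (u i : (ℝ × ℝ) → ℂ) * v i = 1 := by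
  let shift : Fin 2 → ℝ := ![0, 1 / 2]
  refine ⟨fun i => ⟨_, comp_translate_mem_Mc (sinBump_mem_Mc c) (shift i)⟩,
    fun i => ⟨_, comp_translate_mem_Mc (sinBump_mem_Mc (-c)) (shift i)⟩, funext fun p => ?_⟩
  simp only [Finset.sum_apply, Pi.mul_apply, Fin.sum_univ_two, sinBump_mul_sinBump_neg, shift,
    Matrix.cons_val_zero, Matrix.cons_val_one, Pi.one_apply]
  rw [add_zero, mul_add, mul_one_div, Real.sin_add_pi_div_two, ← Complex.ofReal_add,
    Real.sin_sq_add_cos_sq, Complex.ofReal_one]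

noncomputable def productMap (c c' : ℤ) : Mc c ⊗[ℂ] Mc c' →ₗ[ℂ] Mc (c + c') :=
  (Submodule.mulMap (Mc c) (Mc c')).codRestrict (Mc (c + c')) fun t =>
    Submodule.mul_le.2 (fun _ hf _ hg => mul_mem_Mc rfl hf hg)
      (Submodule.mulMap_range (Mc c) (Mc c') ▸ LinearMap.mem_range_self _ t)

lemma coe_productMap_tmul {c c' : ℤ} (f : Mc c) (g : Mc c') :
    (productMap c c' (f ⊗ₜ g) : (ℝ × ℝ) → ℂ) = f * g := rfl

noncomputable def mulLeftMc {a b d : ℤ} (φ : Mc a) (h : a + b = d) : Mc b →ₗ[ℂ] Mc d :=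
  (LinearMap.mulLeft ℂ (φ : (ℝ × ℝ) → ℂ)).restrict fun _ hg => mul_mem_Mc h φ.2 hg

lemma coe_mulLeftMc {a b d : ℤ} (φ : Mc a) (h : a + b = d) (g : Mc b) :
    (mulLeftMc φ h g : (ℝ × ℝ) → ℂ) = φ * g := rfl

lemma balanced_le_ker_productMap (c c' : ℤ) :
    balanced c c' ≤ LinearMap.ker (productMap c c') := by
  refine Submodule.span_le.2 ?_
  rintro _ ⟨φ, -, f, f₁, g, g₁, hf₁, hg₁, rfl⟩
  rw [SetLike.mem_coe, LinearMap.mem_ker, map_sub, sub_eq_zero]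
  apply Subtype.ext
  rw [coe_productMap_tmul, coe_productMap_tmul, hf₁, hg₁, mul_assoc, mul_left_comm]

lemma mulLeftMc_tmul_sub_mem_balanced {c c' : ℤ} (φ : Mc 0) (f : Mc c) (g : Mc c') :
    mulLeftMc φ (zero_add c) f ⊗ₜ g - f ⊗ₜ mulLeftMc φ (zero_add c') g ∈ balanced c c' :=
  Submodule.subset_span ⟨φ, φ.2, f, _, g, _, rfl, rfl, rfl⟩

section Frame

variable {c c' : ℤ} {ι : Type*} [Fintype ι] (u : ι → Mc c) (v : ι → Mc (-c))

noncomputable def frameLift : Mc (c + c') →ₗ[ℂ] Mc c ⊗[ℂ] Mc c' :=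
  ∑ i, TensorProduct.mk ℂ (Mc c) (Mc c') (u i) ∘ₗ mulLeftMc (v i) (neg_add_cancel_left c c')

variable {u v}

lemma productMap_frameLift (hframe : ∑ i, (u i : (ℝ × ℝ) → ℂ) * v i = 1) (h : Mc (c + c')) :
    productMap c c' (frameLift u v h) = h := by
  apply Subtype.ext
  simp only [frameLift, LinearMap.sum_apply, LinearMap.comp_apply,
    TensorProduct.mk_apply, map_sum, Submodule.coe_sum, coe_productMap_tmul, coe_mulLeftMc]
  simp_rw [← mul_assoc, ← Finset.sum_mul, hframe, one_mul]

lemma sub_frameLift_productMap_mem_balanced (hframe : ∑ i, (u i : (ℝ × ℝ) → ℂ) * v i = 1)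
    (t : Mc c ⊗[ℂ] Mc c') :
    t - frameLift u v (productMap c c' t) ∈ balanced c c' := by
  induction t using TensorProduct.induction_on with
  | zero => simp
  | add s t hs ht =>
    convert add_mem hs ht using 1
    rw [map_add, map_add]
    abel
  | tmul f g =>
    let φ : ι → Mc 0 := fun i => ⟨v i * f, mul_mem_Mc (neg_add_cancel c) (v i).2 f.2⟩
    have hf : f = ∑ i, mulLeftMc (φ i) (zero_add c) (u i) := by
      apply Subtype.ext
      simp only [Submodule.coe_sum, coe_mulLeftMc, φ]
      simp_rw [mul_right_comm _ (f : (ℝ × ℝ) → ℂ), mul_comm (v _ : (ℝ × ℝ) → ℂ),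
        ← Finset.sum_mul, hframe, one_mul]
    have hlift : frameLift u v (productMap c c' (f ⊗ₜ g)) =
        ∑ i, u i ⊗ₜ mulLeftMc (φ i) (zero_add c') g := by
      refine (LinearMap.sum_apply _ _ _).trans (Finset.sum_congr rfl fun i _ =>
        congrArg (u i ⊗ₜ[ℂ] ·) (Subtype.ext ?_))
      exact (mul_assoc _ _ _).symm
    rw [hlift]
    nth_rewrite 1 [hf]
    have := Submodule.sum_mem (balanced c c') (t := Finset.univ) fun i _ =>
      mulLeftMc_tmul_sub_mem_balanced (φ i) (u i) g
    -- `rw` cannot see through the two `AddCommMonoid` structures on the tensor product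
    -- (its own and the one underlying `TensorProduct.addCommGroup`), hence `convert`.
    convert this using 1
    rw [TensorProduct.sum_tmul]
    exact Finset.sum_sub_distrib (G := Mc c ⊗[ℂ] Mc c') .. |>.symm

end Frame

/-- For integers `c, c'` the pointwise product `f ⊗ g ↦ fg` induces an isomorphism
of Hilbert `C(𝕋²)`-bimodules `M^c ⊗_{C(𝕋²)} M^{c'} ≅ M^{c+c'}`: there is a surjective
linear map on `M^c ⊗[ℂ] M^{c'}` given on elementary tensors by the pointwise product,
whose kernel is exactly the `C(𝕋²)`-balanced relation, so that it descends to a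
linear bijection `M^c ⊗_{C(𝕋²)} M^{c'} ≅ M^{c+c'}`. -/
theorem Mc_tensor_iso (c c' : ℤ) :
    ∃ Φ : (Mc c ⊗[ℂ] Mc c') →ₗ[ℂ] Mc (c + c'),
      Function.Surjective Φ ∧ LinearMap.ker Φ = balanced c c' ∧
      ∀ (f : Mc c) (g : Mc c'),
        ((Φ (f ⊗ₜ[ℂ] g) : (ℝ × ℝ) → ℂ)) =
          fun p => (f : (ℝ × ℝ) → ℂ) p * (g : (ℝ × ℝ) → ℂ) p := by
  obtain ⟨u, v, hframe⟩ := exists_frame c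
  refine ⟨productMap c c', fun h => ⟨frameLift u v h, productMap_frameLift hframe h⟩,
    le_antisymm (fun t ht => ?_) (balanced_le_ker_productMap c c'), fun f g => rfl⟩
  have := sub_frameLift_productMap_mem_balanced hframe t
  rw [LinearMap.mem_ker.1 ht, map_zero] at this
  exact sub_zero t ▸ this
end

section
/- In the twist groupoid Λ = ⊔_{n∈ℤ} Λ_n built from a homeomorphism α of X and a principal G-bundle with transition functions c_{i,j} (G abelian), the associativity identity holds in the key cocycle form: for x ∈ X, ī₂, k̄₁ ∈ Jⁿ, and appropriate index vectors, c^{(n)}_{j̄, σ_n(k̄₁)}(α^m(x)) · ∏_{l=1}^{n} [c_{π_l(ī₂),π_l(k̄₁)}(α^{m+n-l}(x))]⁻¹ = c^{(n)}_{j̄, σ_n(ī₂)}(α^m(x)). -/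
/-- The flip `σ_n(i_1,…,i_n) = (i_n,…,i_1)`. -/
def flipIdx {J : Type*} {n : ℕ} (iv : Fin n → J) : Fin n → J := fun k => iv k.rev

/-- The refined transition function
`c^{(n)}_{iv,jv}(y) = ∏_{k=1}^n c_{π_k(iv),π_k(jv)}(α^{k-1}(y))`, written with integer
powers of the homeomorphism `α`. -/
def cBarZ {X G J : Type*} [TopologicalSpace X] [CommGroup G] (α : X ≃ₜ X)
    (c : J → J → X → G) {n : ℕ} (iv jv : Fin n → J) (y : X) : G :=
  ∏ k : Fin n, c (iv k) (jv k) ((α.toEquiv ^ (k.1 : ℤ)) y)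

/-- The key cocycle identity proving associativity in the twist groupoid:
`c^{(n)}_{jv, σ_n(kv₁)}(α^m(x)) · ∏_{l=1}^{n} [c_{π_l(iv₂),π_l(kv₁)}(α^{m+n-l}(x))]⁻¹
  = c^{(n)}_{jv, σ_n(iv₂)}(α^m(x))`,
for points `x` lying in the appropriate overlaps. -/
theorem twist_associativity_cocycle {X G J : Type*} [TopologicalSpace X]
    [CommGroup G] (α : X ≃ₜ X) (U : J → Set X)
    (c : J → J → X → G)
    (h1 : ∀ i x, x ∈ U i → c i i x = 1)
    (h2 : ∀ i j x, x ∈ U i ∩ U j → c i j x = (c j i x)⁻¹)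
    (h3 : ∀ i j k x, x ∈ U i ∩ U j ∩ U k → c i j x * c j k x = c i k x)
    (n : ℕ) (hn : 0 < n) (m : ℤ)
    (jv iv₂ kv₁ : Fin n → J) (x : X)
    (hx1 : ∀ l : Fin n, (α.toEquiv ^ (m + (l.1 : ℤ))) x ∈
      U (jv l) ∩ U (flipIdx kv₁ l) ∩ U (flipIdx iv₂ l))
    (hx2 : ∀ l : Fin n, (α.toEquiv ^ (m + (n : ℤ) - ((l.1 : ℤ) + 1))) x ∈
      U (iv₂ l) ∩ U (kv₁ l)) :
    cBarZ α c jv (flipIdx kv₁) ((α.toEquiv ^ m) x) *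
      ∏ l : Fin n,
        (c (iv₂ l) (kv₁ l) ((α.toEquiv ^ (m + (n : ℤ) - ((l.1 : ℤ) + 1))) x))⁻¹ =
    cBarZ α c jv (flipIdx iv₂) ((α.toEquiv ^ m) x) := by

  have hcomp : ∀ (k : Fin n), (α.toEquiv ^ (k.1 : ℤ)) ((α.toEquiv ^ m) x)
      = (α.toEquiv ^ (m + (k.1 : ℤ))) x := by
    intro k
    rw [add_comm, zpow_add]
    rfl
  have hrev : (∏ l : Fin n,
        (c (iv₂ l) (kv₁ l) ((α.toEquiv ^ (m + (n : ℤ) - ((l.1 : ℤ) + 1))) x))⁻¹)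
      = ∏ l : Fin n,
        (c (flipIdx iv₂ l) (flipIdx kv₁ l) ((α.toEquiv ^ (m + (l.1 : ℤ))) x))⁻¹ := by
    rw [← Equiv.prod_comp Fin.revPerm]
    refine Finset.prod_congr rfl fun l _ => ?_
    have h1' : (m + (n : ℤ) - (((l.rev).1 : ℤ) + 1)) = m + (l.1 : ℤ) := by
      have : (l.rev).1 = n - 1 - l.1 := by simp [Fin.rev]; omega
      rw [this]
      have hl := l.2
      push_cast
      omega
    simp only [Fin.revPerm_apply]
    rw [h1']
    rfl
  rw [hrev]
  unfold cBarZ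
  rw [← Finset.prod_mul_distrib]
  refine Finset.prod_congr rfl fun k _ => ?_
  rw [hcomp]
  have hx := hx1 k
  have hji : (α.toEquiv ^ (m + (k.1 : ℤ))) x ∈ U (jv k) := hx.1.1
  have hkk : (α.toEquiv ^ (m + (k.1 : ℤ))) x ∈ U (flipIdx kv₁ k) := hx.1.2
  have hii : (α.toEquiv ^ (m + (k.1 : ℤ))) x ∈ U (flipIdx iv₂ k) := hx.2
  rw [← h2 (flipIdx kv₁ k) (flipIdx iv₂ k) _ ⟨hkk, hii⟩]
  exact h3 _ _ _ _ ⟨⟨hji, hkk⟩, hii⟩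
end

section
/- Let Λ_n denote the quotient of ⊔_{ī∈Jⁿ} G × U_{ī} × {ī} × {n} by the relation (g,x,ī,n) ∼ (h,x,j̄,n) iff x ∈ U_{ī} ∩ U_{j̄} and h = c^{(n)}_{ī,j̄}(x)g (for n > 0, G abelian). Then ∼ is an equivalence relation, and the product [(g,x,ī,n)]·[(g',αⁿ(x),ī',n')] := [(gg', x, (ī,ī'), n+n')] (for n,n' > 0) is well-defined on equivalence classes. -/
/-- The refined open set `U_{iv} = ⋂_{j=1}^n α^{-(j-1)}(U_{π_j(iv)})`. -/
def UBar {X J : Type*} [TopologicalSpace X] (α : X ≃ₜ X) (U : J → Set X)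
    {n : ℕ} (iv : Fin n → J) : Set X :=
  {x | ∀ k : Fin n, (⇑α)^[k.1] x ∈ U (iv k)}

/-- The refined transition function `c^{(n)}_{iv,jv}(x)` for `n > 0`. -/
def cBar {X G J : Type*} [TopologicalSpace X] [CommGroup G] (α : X ≃ₜ X)
    (c : J → J → X → G) {n : ℕ} (iv jv : Fin n → J) (x : X) : G :=
  ∏ k : Fin n, c (iv k) (jv k) ((⇑α)^[k.1] x)

/-- The carrier of `Λ_n` before taking the quotient: triples `(g, x, iv)` with
`x ∈ U_{iv}`. -/
def LambdaCarrier {X G J : Type*} [TopologicalSpace X] (α : X ≃ₜ X)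
    (U : J → Set X) (n : ℕ) : Type _ :=
  {p : G × X × (Fin n → J) // p.2.1 ∈ UBar α U p.2.2}

/-- The relation `(g,x,iv) ∼ (h,x,jv)` iff `h = c^{(n)}_{iv,jv}(x) g`. -/
def lambdaRel {X G J : Type*} [TopologicalSpace X] [CommGroup G] (α : X ≃ₜ X)
    (U : J → Set X) (c : J → J → X → G) (n : ℕ)
    (p q : LambdaCarrier (G := G) α U n) : Prop :=
  p.1.2.1 = q.1.2.1 ∧ q.1.1 = cBar α c p.1.2.2 q.1.2.2 p.1.2.1 * p.1.1

lemma ubar_append {X J : Type*} [TopologicalSpace X] (α : X ≃ₜ X) (U : J → Set X)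
    {n n' : ℕ} {iv : Fin n → J} {iv' : Fin n' → J} {x : X}
    (h : x ∈ UBar α U iv) (h' : (⇑α)^[n] x ∈ UBar α U iv') :
    x ∈ UBar α U (Fin.append iv iv') := by
  intro k
  refine Fin.addCases (fun i => ?_) (fun i => ?_) k
  · simpa using h i
  · have := h' i
    simp only [Fin.append_right]
    rwa [Fin.coe_natAdd, add_comm, Function.iterate_add_apply]

lemma cbar_append {X G J : Type*} [TopologicalSpace X] [CommGroup G] (α : X ≃ₜ X)
    (c : J → J → X → G) {n n' : ℕ} (iv jv : Fin n → J) (iv' jv' : Fin n' → J) (x : X) :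
    cBar α c (Fin.append iv iv') (Fin.append jv jv') x
      = cBar α c iv jv x * cBar α c iv' jv' ((⇑α)^[n] x) := by
  unfold cBar
  rw [Fin.prod_univ_add]
  congr 1
  · simp
  · refine Finset.prod_congr rfl fun i _ => ?_
    simp only [Fin.append_right]
    rw [Fin.coe_natAdd, add_comm, Function.iterate_add_apply]

/-- If the `c_{i,j}` satisfy the cocycle conditions, then for `n, n' > 0`:
(1) `∼` is an equivalence relation on `Λ_n`'s carrier, and
(2) the product `[(g,x,iv,n)]·[(g',αⁿ(x),iv',n')] := [(gg', x, (iv,iv'), n+n')]`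
is well-defined on equivalence classes. -/
theorem lambda_equivalence_and_product {X G J : Type*} [TopologicalSpace X]
    [CommGroup G] (α : X ≃ₜ X) (U : J → Set X)
    (c : J → J → X → G)
    (h1 : ∀ i x, x ∈ U i → c i i x = 1)
    (h2 : ∀ i j x, x ∈ U i ∩ U j → c i j x = (c j i x)⁻¹)
    (h3 : ∀ i j k x, x ∈ U i ∩ U j ∩ U k → c i j x * c j k x = c i k x)
    (n n' : ℕ) (hn : 0 < n) (hn' : 0 < n') :
    Equivalence (lambdaRel (G := G) α U c n) ∧
    (∀ (g g' h h' : G) (x : X) (iv jv : Fin n → J) (iv' jv' : Fin n' → J),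
      x ∈ UBar α U iv → x ∈ UBar α U jv →
      (⇑α)^[n] x ∈ UBar α U iv' → (⇑α)^[n] x ∈ UBar α U jv' →
      h = cBar α c iv jv x * g →
      h' = cBar α c iv' jv' ((⇑α)^[n] x) * g' →
      x ∈ UBar α U (Fin.append iv iv') ∧
      x ∈ UBar α U (Fin.append jv jv') ∧
      h * h' = cBar α c (Fin.append iv iv') (Fin.append jv jv') x * (g * g')) := by
  constructor
  · constructor
    · rintro ⟨⟨g, x, iv⟩, hp⟩
      refine ⟨rfl, ?_⟩
      simp only [cBar]
      rw [Finset.prod_eq_one fun k _ => h1 _ _ (hp k), one_mul]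
    · rintro ⟨⟨g, x, iv⟩, hp⟩ ⟨⟨g', x', jv⟩, hq⟩ ⟨hx, hg⟩
      dsimp only at hx hg ⊢
      subst hx
      refine ⟨rfl, ?_⟩
      rw [hg]
      have : cBar α c jv iv x = (cBar α c iv jv x)⁻¹ := by
        simp only [cBar, ← Finset.prod_inv_distrib]
        exact Finset.prod_congr rfl fun k _ => h2 _ _ _ ⟨hq k, hp k⟩
      rw [this]
      group
    · rintro ⟨⟨g, x, iv⟩, hp⟩ ⟨⟨g', x', jv⟩, hq⟩ ⟨⟨g'', x'', kv⟩, hr⟩ ⟨hx, hg⟩ ⟨hx', hg'⟩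
      dsimp only at *
      subst hx; subst hx'
      refine ⟨rfl, ?_⟩
      have key : cBar α c jv kv x * cBar α c iv jv x = cBar α c iv kv x := by
        simp only [cBar, ← Finset.prod_mul_distrib]
        refine Finset.prod_congr rfl fun k _ => ?_
        rw [mul_comm]
        exact h3 _ _ _ _ ⟨⟨hp k, hq k⟩, hr k⟩
      rw [hg', hg, ← mul_assoc, key]
  · intro g g' h h' x iv jv iv' jv' hx1 hx2 hx3 hx4 hh hh'
    refine ⟨ubar_append α U hx1 hx3, ubar_append α U hx2 hx4, ?_⟩
    rw [cbar_append, hh, hh']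
    ac_rfl
end
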